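/- arXiv:2112.05693 — 6 statements merged into one kernel-verified Lean document; each statement's English description precedes it below -/
import Mathlib

section
/- Let ε > 0 and let 0 < p ≤ 1 − e^{−ε}. Set q = 1 − e^{−ε}(1 − p). Then for every natural number k ≥ 1 and every natural number v with 0 ≤ v ≤ k·q (note q < 1 so v < k), the ratio (1−p)·k/(k−v) satisfies e^{−ε} ≤ (1−p)·k/(k−v) ≤ e^{ε}. -/
/-- For `0 < p ≤ 1 - e^{-ε}` and `q = 1 - e^{-ε}(1-p)`, whenever `v ≤ k·q`
the probability ratio `(1-p)·k/(k-v)` lies between `e^{-ε}` and `e^{ε}`. -/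
theorem ratio_bounds (ε p : ℝ) (hε : 0 < ε) (hp0 : 0 < p)
    (hp : p ≤ 1 - Real.exp (-ε)) (k v : ℕ) (hk : 1 ≤ k)
    (hv : (v : ℝ) ≤ (k : ℝ) * (1 - Real.exp (-ε) * (1 - p))) :
    Real.exp (-ε) ≤ (1 - p) * (k : ℝ) / ((k : ℝ) - (v : ℝ)) ∧
      (1 - p) * (k : ℝ) / ((k : ℝ) - (v : ℝ)) ≤ Real.exp ε := by
  have hkpos : (0:ℝ) < k := by exact_mod_cast Nat.pos_of_ne_zero (by omega)
  have hexp : (0:ℝ) < Real.exp (-ε) := Real.exp_pos _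
  have hp1 : p < 1 := lt_of_le_of_lt hp (by linarith)
  have h1p : (0:ℝ) < 1 - p := by linarith
  have hden : (k:ℝ) * (Real.exp (-ε) * (1 - p)) ≤ (k:ℝ) - v := by nlinarith
  have hdenpos : (0:ℝ) < (k:ℝ) - v := lt_of_lt_of_le (by positivity) hden
  constructor
  · rw [le_div_iff₀ hdenpos]
    have : Real.exp (-ε) ≤ 1 - p := by linarith
    nlinarith
  · rw [div_le_iff₀ hdenpos]
    have hee : Real.exp ε * Real.exp (-ε) = 1 := by
      rw [← Real.exp_add]; simp
    nlinarith [Real.exp_pos ε]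
end

section
/- (Chernoff–Hoeffding relative-entropy bound) Let 0 < p < 1, let q satisfy p ≤ q < 1, and let k ≥ 1 be a natural number. Then Pr[B(k,p) ≥ k·q] ≤ exp(−k·D(q‖p)), where D(q‖p) = q·ln(q/p) + (1−q)·ln((1−q)/(1−p)) is the Kullback–Leibler divergence between Bernoulli(q) and Bernoulli(p). -/
/-- Kullback–Leibler divergence between Bernoulli(q) and Bernoulli(p). -/
noncomputable def klBernoulli (q p : ℝ) : ℝ :=
  q * Real.log (q / p) + (1 - q) * Real.log ((1 - q) / (1 - p))

/-- Chernoff–Hoeffding relative-entropy bound: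
`Pr[B(k,p) ≥ k·q] ≤ exp(−k·D(q‖p))` for `p ≤ q < 1`. -/
theorem chernoff_hoeffding (p q : ℝ) (hp0 : 0 < p) (hp1 : p < 1)
    (hpq : p ≤ q) (hq1 : q < 1) (k : ℕ) (hk : 1 ≤ k) :
    (∑ v ∈ Finset.range (k + 1),
        if (k : ℝ) * q ≤ (v : ℝ) then (k.choose v : ℝ) * p ^ v * (1 - p) ^ (k - v) else 0)
      ≤ Real.exp (-(k : ℝ) * klBernoulli q p) := by
  have hq0 : 0 < q := lt_of_lt_of_le hp0 hpq
  have h1q : 0 < 1 - q := by linarith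
  have h1p : 0 < 1 - p := by linarith
  set r : ℝ := q * (1 - p) / (p * (1 - q)) with hr
  have hr0 : 0 < r := by positivity
  have hr1 : 1 ≤ r := by
    rw [hr, le_div_iff₀ (by positivity)]
    nlinarith
  set lam : ℝ := Real.log r with hlam
  have hlam0 : 0 ≤ lam := Real.log_nonneg hr1
  have hexp : Real.exp lam = r := Real.exp_log hr0
  have step1 : (∑ v ∈ Finset.range (k + 1),
        if (k : ℝ) * q ≤ (v : ℝ) then (k.choose v : ℝ) * p ^ v * (1 - p) ^ (k - v) else 0)
      ≤ ∑ v ∈ Finset.range (k + 1),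
        (k.choose v : ℝ) * p ^ v * (1 - p) ^ (k - v) * Real.exp (lam * ((v : ℝ) - (k : ℝ) * q)) := by
    apply Finset.sum_le_sum
    intro v _
    have hc : (0:ℝ) ≤ (k.choose v : ℝ) * p ^ v * (1 - p) ^ (k - v) := by positivity
    split_ifs with h
    · nth_rewrite 1 [← mul_one ((k.choose v : ℝ) * p ^ v * (1 - p) ^ (k - v))]
      apply mul_le_mul_of_nonneg_left _ hc
      rw [← Real.exp_zero]
      exact Real.exp_le_exp.mpr (by nlinarith)
    · positivity
  refine step1.trans ?_
  have key : ∀ v : ℕ, Real.exp (lam * ((v : ℝ) - (k : ℝ) * q))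
      = r ^ v * Real.exp (-(lam * ((k : ℝ) * q))) := by
    intro v
    rw [← hexp, ← Real.exp_nat_mul, ← Real.exp_add]
    congr 1; ring
  have step2 : ∑ v ∈ Finset.range (k + 1),
        (k.choose v : ℝ) * p ^ v * (1 - p) ^ (k - v) * Real.exp (lam * ((v : ℝ) - (k : ℝ) * q))
      = Real.exp (-(lam * ((k : ℝ) * q))) * (p * r + (1 - p)) ^ k := by
    rw [add_pow, Finset.mul_sum]
    apply Finset.sum_congr rfl
    intro v _
    rw [key v, mul_pow]
    ring
  rw [step2]
  have hpr : p * r + (1 - p) = (1 - p) / (1 - q) := by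
    rw [hr]
    field_simp
    ring
  rw [hpr]
  have hfrac : (0:ℝ) < (1 - p) / (1 - q) := by positivity
  have : ((1 - p) / (1 - q)) ^ k = Real.exp ((k : ℝ) * Real.log ((1 - p) / (1 - q))) := by
    rw [Real.exp_nat_mul, Real.exp_log hfrac]
  rw [this, ← Real.exp_add]
  apply le_of_eq
  congr 1
  rw [hlam, hr, Real.log_div (by positivity) (by positivity),
    Real.log_mul (ne_of_gt hq0) (ne_of_gt h1p), Real.log_mul (ne_of_gt hp0) (ne_of_gt h1q),
    Real.log_div (ne_of_gt h1p) (ne_of_gt h1q)]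
  unfold klBernoulli
  rw [Real.log_div (ne_of_gt hq0) (ne_of_gt hp0), Real.log_div (ne_of_gt h1q) (ne_of_gt h1p)]
  ring
end

section
/- (Core bound of the main theorem) Let ε > 0, let 0 < p ≤ 1 − e^{−ε}, and set q = 1 − e^{−ε}(1 − p). Let τ ≥ 1 be a real threshold. Then for every natural number k, the probability that a Binomial(k,p) random variable exceeds max(k·q, τ) satisfies Pr[B(k,p) > max(k·q, τ)] ≤ exp(−(τ/q)·D(q‖p)), where D(q‖p) = q·ln(q/p) + (1−q)·ln((1−q)/(1−p)). -/
lemma expo_ineq (q L lam τ : ℝ) (k : ℝ) (hq0 : 0 < q) (hL0 : 0 ≤ L)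
    (hD0 : 0 ≤ q * lam - L) :
    k * L - lam * max (k * q) τ ≤ -(τ / q) * (q * lam - L) := by
  have ht : τ = (τ / q) * q := by field_simp
  set t : ℝ := τ / q with htdef
  rcases max_cases (k * q) τ with ⟨hMeq, hge⟩ | ⟨hMeq, hgt⟩
  · rw [hMeq]
    have hkt : t ≤ k := le_of_mul_le_mul_right (by linarith) hq0
    nlinarith [mul_nonneg (sub_nonneg.mpr hkt) hD0]
  · rw [hMeq, ht]
    have hkt : k ≤ t := le_of_mul_le_mul_right (by linarith) hq0
    nlinarith [mul_nonneg (sub_nonneg.mpr hkt) hL0]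

/-- Core bound of the main theorem: with `0 < p ≤ 1 - e^{-ε}`,
`q = 1 - e^{-ε}(1-p)` and a real threshold `τ ≥ 1`, for every `k`,
`Pr[B(k,p) > max(k·q, τ)] ≤ exp(−(τ/q)·D(q‖p))`. -/
theorem core_tail_bound (ε p : ℝ) (hε : 0 < ε) (hp0 : 0 < p)
    (hp : p ≤ 1 - Real.exp (-ε)) (τ : ℝ) (hτ : 1 ≤ τ) (k : ℕ) :
    (∑ v ∈ Finset.range (k + 1),
        if max ((k : ℝ) * (1 - Real.exp (-ε) * (1 - p))) τ < (v : ℝ) then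
          (k.choose v : ℝ) * p ^ v * (1 - p) ^ (k - v) else 0)
      ≤ Real.exp (-(τ / (1 - Real.exp (-ε) * (1 - p))) *
          klBernoulli (1 - Real.exp (-ε) * (1 - p)) p) := by
  have hE0 : 0 < Real.exp (-ε) := Real.exp_pos _
  have hE1 : Real.exp (-ε) < 1 := by
    have := Real.exp_lt_exp.mpr (show -ε < 0 by linarith)
    simpa using this
  set E := Real.exp (-ε) with hEdef
  set q : ℝ := 1 - E * (1 - p) with hqdef
  have hp1 : p < 1 := by linarith
  have h1p : 0 < 1 - p := by linarith
  have hqp : p < q := by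
    have h : E * (1 - p) < 1 * (1 - p) := by nlinarith
    rw [hqdef]; nlinarith
  have h1q : 0 < 1 - q := by
    have h : 0 < E * (1 - p) := mul_pos hE0 h1p
    rw [hqdef]; linarith
  have hq0 : 0 < q := lt_trans hp0 hqp
  set L : ℝ := Real.log ((1 - p) / (1 - q)) with hLdef
  set lam : ℝ := Real.log (q * (1 - p) / (p * (1 - q))) with hlamdef
  have hL0 : 0 ≤ L := by
    apply Real.log_nonneg
    rw [le_div_iff₀ h1q]; linarith
  have hlam0 : 0 ≤ lam := by
    apply Real.log_nonneg
    rw [le_div_iff₀ (by positivity)]; nlinarith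
  have hexplam : Real.exp lam = q * (1 - p) / (p * (1 - q)) :=
    Real.exp_log (by positivity)
  have hexpL : Real.exp L = (1 - p) / (1 - q) :=
    Real.exp_log (by positivity)
  have hlam_eq : lam = Real.log q - Real.log p + (Real.log (1 - p) - Real.log (1 - q)) := by
    rw [hlamdef, Real.log_div (by positivity) (by positivity),
      Real.log_mul hq0.ne' h1p.ne', Real.log_mul hp0.ne' h1q.ne']
    ring
  have hL_eq : L = Real.log (1 - p) - Real.log (1 - q) := Real.log_div h1p.ne' h1q.ne'
  have hD_eq : klBernoulli q p = q * lam - L := by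
    unfold klBernoulli
    rw [Real.log_div hq0.ne' hp0.ne', Real.log_div h1q.ne' h1p.ne', hlam_eq, hL_eq]
    ring
  have hD0 : 0 ≤ q * lam - L := by
    have h1 : Real.log (p / q) ≤ p / q - 1 := Real.log_le_sub_one_of_pos (by positivity)
    have h2 : Real.log ((1 - p) / (1 - q)) ≤ (1 - p) / (1 - q) - 1 :=
      Real.log_le_sub_one_of_pos (by positivity)
    rw [Real.log_div hp0.ne' hq0.ne'] at h1
    rw [Real.log_div h1p.ne' h1q.ne'] at h2
    have e1 : q * (p / q) = p := by field_simp
    have e2 : (1 - q) * ((1 - p) / (1 - q)) = 1 - p := by field_simp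
    rw [hlam_eq, hL_eq]
    nlinarith [mul_le_mul_of_nonneg_left h1 hq0.le, mul_le_mul_of_nonneg_left h2 h1q.le]
  set M : ℝ := max ((k : ℝ) * q) τ with hMdef
  -- Step A: termwise Chernoff bound
  have stepA : (∑ v ∈ Finset.range (k + 1),
      if M < (v : ℝ) then (k.choose v : ℝ) * p ^ v * (1 - p) ^ (k - v) else 0)
      ≤ ∑ v ∈ Finset.range (k + 1),
        Real.exp (lam * ((v : ℝ) - M)) * ((k.choose v : ℝ) * p ^ v * (1 - p) ^ (k - v)) := by
    apply Finset.sum_le_sum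
    intro v _
    have hterm : 0 ≤ (k.choose v : ℝ) * p ^ v * (1 - p) ^ (k - v) := by positivity
    split_ifs with h
    · have h1 : (1 : ℝ) ≤ Real.exp (lam * ((v : ℝ) - M)) :=
        Real.one_le_exp (mul_nonneg hlam0 (by linarith))
      nlinarith
    · positivity
  -- Step B: compute the tilted sum
  have stepB : (∑ v ∈ Finset.range (k + 1),
      Real.exp (lam * ((v : ℝ) - M)) * ((k.choose v : ℝ) * p ^ v * (1 - p) ^ (k - v)))
      = Real.exp ((k : ℝ) * L - lam * M) := by
    have hterm : ∀ v ∈ Finset.range (k + 1),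
        Real.exp (lam * ((v : ℝ) - M)) * ((k.choose v : ℝ) * p ^ v * (1 - p) ^ (k - v))
        = (p * Real.exp lam) ^ v * (1 - p) ^ (k - v) * (k.choose v : ℝ)
            * Real.exp (-(lam * M)) := by
      intro v _
      rw [show lam * ((v : ℝ) - M) = (v : ℝ) * lam + -(lam * M) by ring, Real.exp_add,
        mul_pow, ← Real.exp_nat_mul]
      ring
    rw [Finset.sum_congr rfl hterm, ← Finset.sum_mul, ← add_pow]
    have hkey : p * Real.exp lam + (1 - p) = Real.exp L := by
      rw [hexplam, hexpL]
      field_simp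
      ring
    rw [hkey, ← Real.exp_nat_mul, ← Real.exp_add]
    ring_nf
  -- Step C: exponent comparison
  have stepC : (k : ℝ) * L - lam * M ≤ -(τ / q) * (q * lam - L) := by
    rw [hMdef]; exact expo_ineq q L lam τ (k : ℝ) hq0 hL0 hD0
  refine le_trans (le_trans stepA (le_of_eq stepB)) ?_
  rw [hD_eq]
  exact Real.exp_le_exp.mpr stepC
end

section
/- (Main privacy theorem, per-count form) Let ε > 0, 0 < p ≤ 1 − e^{−ε}, q = 1 − e^{−ε}(1 − p), and τ ≥ 1 a natural-number threshold. Define the thresholding map T_τ : ℕ → ℕ by T_τ(v) = v if v ≥ τ and T_τ(v) = 0 otherwise, and for each k ∈ ℕ let M_k be the probability distribution of T_τ applied to a Binomial(k,p) random variable. Then for every k ≥ 1 and every set S ⊆ ℕ of outputs, both Pr[M_k ∈ S] ≤ e^{ε}·Pr[M_{k−1} ∈ S] + δ and Pr[M_{k−1} ∈ S] ≤ e^{ε}·Pr[M_k ∈ S] + δ hold with δ = exp(−(τ/q)·D(q‖p)), where D(q‖p) = q·ln(q/p) + (1−q)·ln((1−q)/(1−p)). -/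
/-- `Pr[M_k ∈ S]`: the probability that the threshold map `T_τ` (reporting a count `v`
if `v ≥ τ` and `0` otherwise) applied to a Binomial(k,p) sample lands in `S ⊆ ℕ`. -/
noncomputable def mechProb (p : ℝ) (τ k : ℕ) (S : Set ℕ) : ℝ :=
  ∑ v ∈ Finset.range (k + 1),
    S.indicator (fun _ => (k.choose v : ℝ) * p ^ v * (1 - p) ^ (k - v))
      (if τ ≤ v then v else 0)

/-!
Write `b k v = C(k,v) p^v (1-p)^(k-v)` and `q = 1 - e^{-ε}(1-p)`. Pascal's rule gives
`b (k+1) v ≥ (1-p) b k v ≥ e^{-ε} b k v`, so `M_k ≥ e^{-ε} M_{k-1}` outcome by outcome.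
In the other direction, the output `0` has probability `Pr[Bin(k,p) < τ]`, which decreases in `k`,
and for `v ≤ (k+1) q` the ratio `b (k+1) v / b k v = (k+1)(1-p)/(k+1-v)` is at most `e^ε`.
The remaining counts exceed both `τ` and `(k+1) q`, and the Chernoff bound with the tilt that is
optimal for the level `q` shows that their mass is at most `exp(-(τ/q) D(q‖p))`.
-/

open Finset Real

noncomputable def binomProb (p : ℝ) (k v : ℕ) : ℝ := k.choose v * p ^ v * (1 - p) ^ (k - v)

lemma binomProb_nonneg {p : ℝ} (hp0 : 0 ≤ p) (hp1 : p ≤ 1) (k v : ℕ) :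
    0 ≤ binomProb p k v := by
  have : 0 ≤ 1 - p := by linarith
  unfold binomProb
  positivity

lemma binomProb_of_lt {p : ℝ} {k v : ℕ} (h : k < v) : binomProb p k v = 0 := by
  simp [binomProb, Nat.choose_eq_zero_of_lt h]

lemma binomProb_succ_zero (p : ℝ) (k : ℕ) :
    binomProb p (k + 1) 0 = (1 - p) * binomProb p k 0 := by
  simp [binomProb, pow_succ, mul_comm]

lemma binomProb_succ_succ (p : ℝ) (k v : ℕ) :
    binomProb p (k + 1) (v + 1) = (1 - p) * binomProb p k (v + 1) + p * binomProb p k v := by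
  unfold binomProb
  rw [Nat.choose_succ_succ, Nat.cast_add, Nat.add_sub_add_right]
  rcases lt_or_ge v k with h | h
  · obtain ⟨j, rfl⟩ := Nat.exists_eq_add_of_lt h
    rw [show v + j + 1 - v = j + 1 by omega, show v + j + 1 - (v + 1) = j by omega]
    ring
  · rw [Nat.choose_eq_zero_of_lt (by omega : k < v + 1)]
    ring

lemma one_sub_mul_binomProb_le_succ {p : ℝ} (hp0 : 0 ≤ p) (hp1 : p ≤ 1) (k v : ℕ) :
    (1 - p) * binomProb p k v ≤ binomProb p (k + 1) v := by
  cases v with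
  | zero => rw [binomProb_succ_zero]
  | succ v =>
    rw [binomProb_succ_succ]
    have := binomProb_nonneg hp0 hp1 k v
    nlinarith

lemma sub_mul_binomProb_succ (p : ℝ) {k v : ℕ} (h : v ≤ k) :
    ((k : ℝ) + 1 - v) * binomProb p (k + 1) v = ((k : ℝ) + 1) * (1 - p) * binomProb p k v := by
  have hchoose : ((k.choose v * (k + 1) : ℕ) : ℝ) = ((k + 1).choose v * (k + 1 - v) : ℕ) :=
    congrArg _ (Nat.choose_mul_succ_eq k v)
  push_cast [Nat.cast_sub (by omega : v ≤ k + 1)] at hchoose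
  unfold binomProb
  rw [Nat.sub_add_comm h, pow_succ]
  linear_combination -(p ^ v * (1 - p) ^ (k - v) * (1 - p)) * hchoose

lemma binomProb_succ_le_mul {p c : ℝ} {k v : ℕ} (hp0 : 0 ≤ p) (hp1 : p < 1) (hc : 0 ≤ c)
    (hv : ((k : ℝ) + 1) * (1 - p) ≤ c * ((k : ℝ) + 1 - v)) :
    binomProb p (k + 1) v ≤ c * binomProb p k v := by
  have hpos : 0 < ((k : ℝ) + 1) * (1 - p) := by
    have : 0 < 1 - p := by linarith
    positivity
  have hvk : v ≤ k := by
    by_contra! h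
    have : (k : ℝ) + 1 ≤ v := by exact_mod_cast h
    nlinarith
  refine le_of_mul_le_mul_left ?_ hpos
  calc ((k : ℝ) + 1) * (1 - p) * binomProb p (k + 1) v
      ≤ c * ((k : ℝ) + 1 - v) * binomProb p (k + 1) v :=
        mul_le_mul_of_nonneg_right hv (binomProb_nonneg hp0 hp1.le _ _)
    _ = ((k : ℝ) + 1) * (1 - p) * (c * binomProb p k v) := by
        rw [mul_assoc, sub_mul_binomProb_succ p hvk]
        ring

lemma binomProb_succ_le_exp_mul {p ε q : ℝ} {k v : ℕ} (hp0 : 0 ≤ p) (hp1 : p < 1)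
    (hq : 1 - q = exp (-ε) * (1 - p)) (hv : (v : ℝ) ≤ ((k : ℝ) + 1) * q) :
    binomProb p (k + 1) v ≤ exp ε * binomProb p k v := by
  refine binomProb_succ_le_mul hp0 hp1 (exp_nonneg ε) ?_
  have hexp : exp ε * exp (-ε) = 1 := by rw [← exp_add, add_neg_cancel, exp_zero]
  calc ((k : ℝ) + 1) * (1 - p) = exp ε * (((k : ℝ) + 1) * (1 - q)) := by
        rw [hq]; linear_combination -((k : ℝ) + 1) * (1 - p) * hexp
    _ ≤ exp ε * ((k : ℝ) + 1 - v) := by gcongr; linarith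

lemma sum_range_binomProb_succ_le {p : ℝ} (hp0 : 0 ≤ p) (hp1 : p ≤ 1) (k τ : ℕ) :
    ∑ v ∈ range τ, binomProb p (k + 1) v ≤ ∑ v ∈ range τ, binomProb p k v := by
  cases τ with
  | zero => simp
  | succ j =>
    have hj : ∑ v ∈ range j, binomProb p k v ≤ ∑ v ∈ range (j + 1), binomProb p k v := by
      rw [sum_range_succ]
      linarith [binomProb_nonneg hp0 hp1 k j]
    have hrec : ∑ v ∈ range (j + 1), binomProb p (k + 1) v =
        (1 - p) * ∑ v ∈ range (j + 1), binomProb p k v +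
          p * ∑ v ∈ range j, binomProb p k v := by
      simp only [sum_range_succ' (binomProb p (k + 1)), sum_range_succ' (binomProb p k),
        binomProb_succ_succ, binomProb_succ_zero, sum_add_distrib, ← mul_sum]
      ring
    rw [hrec]
    nlinarith

lemma sum_binomProb_mul_pow (p x : ℝ) (k : ℕ) :
    ∑ v ∈ range (k + 1), binomProb p k v * x ^ v = (p * x + (1 - p)) ^ k := by
  rw [add_pow]
  refine sum_congr rfl fun v _ => ?_
  rw [binomProb, mul_pow]
  ring

lemma sum_binomProb_le_exp_mul_pow {p s : ℝ} (hp0 : 0 ≤ p) (hp1 : p ≤ 1) (hs : 0 ≤ s)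
    (a : ℝ) (m : ℕ) (F : Finset ℕ) (hF : ∀ v ∈ F, a ≤ v) :
    ∑ v ∈ F, binomProb p m v ≤ exp (-(a * s)) * (p * exp s + (1 - p)) ^ m := by
  have hb := binomProb_nonneg hp0 hp1 m
  have hterm : ∀ v ∈ F, binomProb p m v ≤ exp (-(a * s)) * (binomProb p m v * exp s ^ v) := by
    intro v hv
    have : 1 ≤ exp (-(a * s)) * exp s ^ v := by
      rw [← exp_nat_mul, ← exp_add]
      exact one_le_exp (by nlinarith [hF v hv])
    nlinarith [hb v]
  have hrange : ∑ v ∈ F, binomProb p m v * exp s ^ v ≤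
      ∑ v ∈ range (m + 1), binomProb p m v * exp s ^ v := by
    rw [← sum_filter_of_ne (p := (· < m + 1)) fun v _ hne => by
      by_contra! h
      exact hne (by rw [binomProb_of_lt (by omega), zero_mul])]
    exact sum_le_sum_of_subset_of_nonneg (fun v hv => mem_range.2 (mem_filter.1 hv).2)
      fun v _ _ => mul_nonneg (hb v) (pow_nonneg (exp_nonneg s) v)
  calc ∑ v ∈ F, binomProb p m v
      ≤ ∑ v ∈ F, exp (-(a * s)) * (binomProb p m v * exp s ^ v) := sum_le_sum hterm
    _ = exp (-(a * s)) * ∑ v ∈ F, binomProb p m v * exp s ^ v := by rw [mul_sum]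
    _ ≤ exp (-(a * s)) * ∑ v ∈ range (m + 1), binomProb p m v * exp s ^ v := by gcongr
    _ = exp (-(a * s)) * (p * exp s + (1 - p)) ^ m := by rw [sum_binomProb_mul_pow]

lemma klBernoulli_nonneg {p q : ℝ} (hp0 : 0 < p) (hp1 : p < 1) (hq0 : 0 ≤ q) (hq1 : q ≤ 1) :
    0 ≤ klBernoulli q p := by
  have hp1' : 0 < 1 - p := by linarith
  have h : klBernoulli q p = p * InformationTheory.klFun (q / p) +
      (1 - p) * InformationTheory.klFun ((1 - q) / (1 - p)) := by
    unfold klBernoulli InformationTheory.klFun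
    field_simp
    ring
  rw [h]
  have := InformationTheory.klFun_nonneg (div_nonneg hq0 hp0.le)
  have := InformationTheory.klFun_nonneg (div_nonneg (sub_nonneg.2 hq1) hp1'.le)
  positivity

lemma sum_binomProb_le_exp_neg_klBernoulli {p q : ℝ} (hp0 : 0 < p) (hpq : p < q) (hq1 : q < 1)
    (τ : ℝ) (m : ℕ) (F : Finset ℕ) (hF : ∀ v ∈ F, τ ≤ v ∧ m * q ≤ v) :
    ∑ v ∈ F, binomProb p m v ≤ exp (-(τ / q) * klBernoulli q p) := by
  have hq0 : 0 < q := hp0.trans hpq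
  have hp1 : 0 < 1 - p := by linarith
  have hq1' : 0 < 1 - q := by linarith
  set L := log ((1 - p) / (1 - q))
  set s := log (q / p) + L
  have hL : 0 ≤ L := log_nonneg ((one_le_div hq1').2 (by linarith))
  have hs : 0 ≤ s := add_nonneg (log_nonneg ((one_le_div hp0).2 hpq.le)) hL
  have hmgf : p * exp s + (1 - p) = exp L := by
    rw [exp_add, exp_log (div_pos hq0 hp0), exp_log (div_pos hp1 hq1')]
    field_simp
    ring
  have hkl : klBernoulli q p = q * s - L := by
    have : log ((1 - q) / (1 - p)) = -L := by rw [← log_inv, inv_div]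
    rw [klBernoulli, this]
    ring
  have hkl0 : 0 ≤ q * s - L := hkl ▸ klBernoulli_nonneg hp0 (by linarith) hq0.le hq1.le
  -- tilting at `max τ (m q)` covers both the case `τ ≤ m q` and the case `m q < τ`
  have hexponent : -(max τ (m * q) * s) + m * L ≤ -(τ / q) * (q * s - L) := by
    rcases le_total τ (m * q) with h | h
    · rw [max_eq_right h]
      have : τ / q ≤ m := (div_le_iff₀ hq0).2 h
      nlinarith
    · rw [max_eq_left h]
      have : m ≤ τ / q := (le_div_iff₀ hq0).2 h
      field_simp
      nlinarith
  calc ∑ v ∈ F, binomProb p m v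
      ≤ exp (-(max τ (m * q) * s)) * (p * exp s + (1 - p)) ^ m :=
        sum_binomProb_le_exp_mul_pow hp0.le (by linarith) hs _ m F fun v hv =>
          max_le (hF v hv).1 (hF v hv).2
    _ = exp (-(max τ (m * q) * s) + m * L) := by rw [hmgf, ← exp_nat_mul, ← exp_add]
    _ ≤ exp (-(τ / q) * klBernoulli q p) := by rw [hkl]; exact exp_le_exp.2 hexponent

lemma mechProb_eq_indicator_add_sum {p : ℝ} {τ k N : ℕ} (hkN : k < N) (hτN : τ ≤ N)
    (S : Set ℕ) :
    mechProb p τ k S = S.indicator (fun _ => ∑ v ∈ range τ, binomProb p k v) 0 +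
      ∑ v ∈ Ico τ N, S.indicator (binomProb p k) v := by
  have hext : mechProb p τ k S =
      ∑ v ∈ range N, S.indicator (fun _ => binomProb p k v) (if τ ≤ v then v else 0) :=
    sum_subset (range_subset_range.2 hkN) fun v _ hv => by
      show S.indicator (fun _ => binomProb p k v) _ = 0
      simp [binomProb_of_lt (by simpa using hv : k < v)]
  rw [hext, ← sum_range_add_sum_Ico _ hτN]
  congr 1
  · rw [sum_congr rfl fun v hv => by rw [if_neg (not_le.2 (mem_range.1 hv))]]
    by_cases h0 : (0 : ℕ) ∈ S <;> simp [h0]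
  · refine sum_congr rfl fun v hv => ?_
    rw [if_pos (mem_Ico.1 hv).1]
    rfl

lemma mechProb_le_mul_mechProb_succ {p c : ℝ} {τ : ℕ} (hp0 : 0 ≤ p) (hp1 : p ≤ 1)
    (hc : 1 ≤ c * (1 - p)) (n : ℕ) (S : Set ℕ) :
    mechProb p τ n S ≤ c * mechProb p τ (n + 1) S := by
  have hc0 : 0 ≤ c := by nlinarith
  have hle : ∀ v, binomProb p n v ≤ c * binomProb p (n + 1) v := fun v => by
    nlinarith [one_sub_mul_binomProb_le_succ hp0 hp1 n v, binomProb_nonneg hp0 hp1 n v]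
  obtain ⟨N, hN, hτN⟩ : ∃ N, n + 1 < N ∧ τ ≤ N := ⟨n + 2 + τ, by omega, by omega⟩
  rw [mechProb_eq_indicator_add_sum (by omega) hτN, mechProb_eq_indicator_add_sum hN hτN,
    mul_add, mul_sum]
  gcongr with v
  · rw [← Set.indicator_const_mul]
    exact Set.indicator_le_indicator (by rw [mul_sum]; exact sum_le_sum fun v _ => hle v)
  · rw [← Set.indicator_const_mul]
    exact Set.indicator_le_indicator (hle v)

lemma mechProb_succ_le {p ε q : ℝ} {τ : ℕ} (hp0 : 0 < p) (hp1 : p < 1) (hε : 0 < ε)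
    (hq : 1 - q = exp (-ε) * (1 - p)) (n : ℕ) (S : Set ℕ) :
    mechProb p τ (n + 1) S ≤ exp ε * mechProb p τ n S + exp (-(τ / q) * klBernoulli q p) := by
  have hq1 : q < 1 := by nlinarith [exp_pos (-ε)]
  have hpq : p < q := by nlinarith [exp_lt_one_iff.2 (neg_lt_zero.2 hε)]
  have hb := binomProb_nonneg hp0.le hp1.le
  obtain ⟨N, hN, hτN⟩ : ∃ N, n + 1 < N ∧ τ ≤ N := ⟨n + 2 + τ, by omega, by omega⟩
  rw [mechProb_eq_indicator_add_sum hN hτN, mechProb_eq_indicator_add_sum (by omega) hτN,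
    ← sum_filter_add_sum_filter_not (Ico τ N) fun v : ℕ => (v : ℝ) ≤ (n + 1 : ℕ) * q]
  have hlow : S.indicator (fun _ => ∑ v ∈ range τ, binomProb p (n + 1) v) 0 ≤
      exp ε * S.indicator (fun _ => ∑ v ∈ range τ, binomProb p n v) 0 := by
    rw [← Set.indicator_const_mul]
    exact Set.indicator_le_indicator ((sum_range_binomProb_succ_le hp0.le hp1.le n τ).trans
      (le_mul_of_one_le_left (sum_nonneg fun v _ => hb n v) (one_le_exp hε.le)))
  have hgood : ∑ v ∈ (Ico τ N).filter fun v : ℕ => (v : ℝ) ≤ (n + 1 : ℕ) * q,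
      S.indicator (binomProb p (n + 1)) v ≤
      exp ε * ∑ v ∈ Ico τ N, S.indicator (binomProb p n) v := by
    rw [mul_sum]
    refine (sum_le_sum fun v hv => ?_).trans (sum_le_sum_of_subset_of_nonneg (filter_subset _ _)
      fun v _ _ => mul_nonneg (exp_nonneg ε) (Set.indicator_nonneg (fun v _ => hb n v) v))
    rw [← Set.indicator_const_mul]
    exact Set.indicator_le_indicator
      (binomProb_succ_le_exp_mul hp0.le hp1 hq (by exact_mod_cast (mem_filter.1 hv).2))
  have hbad : ∑ v ∈ (Ico τ N).filter fun v : ℕ => ¬(v : ℝ) ≤ (n + 1 : ℕ) * q,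
      S.indicator (binomProb p (n + 1)) v ≤ exp (-(τ / q) * klBernoulli q p) :=
    (sum_le_sum fun v _ => Set.indicator_le_self' (fun v _ => hb (n + 1) v) v).trans
      (sum_binomProb_le_exp_neg_klBernoulli hp0 hpq hq1 τ (n + 1) _ fun v hv => by
        obtain ⟨hvIco, hvbad⟩ := mem_filter.1 hv
        exact ⟨by exact_mod_cast (mem_Ico.1 hvIco).1, (not_le.1 hvbad).le⟩)
  linarith

theorem sample_and_threshold_dp_general (ε p : ℝ) (hε : 0 < ε) (hp0 : 0 < p)
    (hp : p ≤ 1 - Real.exp (-ε)) (τ : ℕ) (k : ℕ) (hk : 1 ≤ k)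
    (S : Set ℕ) :
    mechProb p τ k S ≤ Real.exp ε * mechProb p τ (k - 1) S +
        Real.exp (-((τ : ℝ) / (1 - Real.exp (-ε) * (1 - p))) *
          klBernoulli (1 - Real.exp (-ε) * (1 - p)) p) ∧
      mechProb p τ (k - 1) S ≤ Real.exp ε * mechProb p τ k S +
        Real.exp (-((τ : ℝ) / (1 - Real.exp (-ε) * (1 - p))) *
          klBernoulli (1 - Real.exp (-ε) * (1 - p)) p) := by
  obtain ⟨n, rfl⟩ := Nat.exists_eq_add_of_le' hk
  rw [Nat.add_sub_cancel]
  have hp1 : p < 1 := by linarith [exp_pos (-ε)]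
  refine ⟨mechProb_succ_le hp0 hp1 hε (by ring) n S, ?_⟩
  have hc : 1 ≤ exp ε * (1 - p) := by
    calc 1 = exp ε * exp (-ε) := by rw [← exp_add, add_neg_cancel, exp_zero]
      _ ≤ exp ε * (1 - p) := by gcongr; linarith
  exact (mechProb_le_mul_mechProb_succ hp0.le hp1.le hc n S).trans
    (le_add_of_nonneg_right (exp_nonneg _))

/-- Main privacy theorem (per-count form): the sample-and-threshold mechanism on
neighboring counts `k` and `k-1` satisfies `(ε, δ)`-DP with
`δ = exp(−(τ/q)·D(q‖p))`, `q = 1 - e^{-ε}(1-p)`. -/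
theorem sample_and_threshold_dp (ε p : ℝ) (hε : 0 < ε) (hp0 : 0 < p)
    (hp : p ≤ 1 - Real.exp (-ε)) (τ : ℕ) (hτ : 1 ≤ τ) (k : ℕ) (hk : 1 ≤ k)
    (S : Set ℕ) :
    mechProb p τ k S ≤ Real.exp ε * mechProb p τ (k - 1) S +
        Real.exp (-((τ : ℝ) / (1 - Real.exp (-ε) * (1 - p))) *
          klBernoulli (1 - Real.exp (-ε) * (1 - p)) p) ∧
      mechProb p τ (k - 1) S ≤ Real.exp ε * mechProb p τ k S +
        Real.exp (-((τ : ℝ) / (1 - Real.exp (-ε) * (1 - p))) *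
          klBernoulli (1 - Real.exp (-ε) * (1 - p)) p) :=
  sample_and_threshold_dp_general ε p hε hp0 hp τ k hk S
end

section
/- Let 0 < α ≤ 1 and ε > 0, and set p = α(1 − e^{−ε}) and q = 1 − e^{−ε}(1 − p). Then ((1 − q)/q)·ε < 1/(1 + α). -/
/-- With `p = α(1 - e^{-ε})` and `q = 1 - e^{-ε}(1-p)`, we have
`((1-q)/q)·ε < 1/(1+α)` for all `ε > 0`. -/
theorem q_ratio_lt (α ε : ℝ) (hα0 : 0 < α) (hα1 : α ≤ 1) (hε : 0 < ε) :
    ((1 - (1 - Real.exp (-ε) * (1 - α * (1 - Real.exp (-ε))))) /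
        (1 - Real.exp (-ε) * (1 - α * (1 - Real.exp (-ε))))) * ε
      < 1 / (1 + α) := by
  set t := Real.exp (-ε) with ht
  have ht0 : 0 < t := Real.exp_pos _
  have ht1 : t < 1 := by
    rw [ht, Real.exp_lt_one_iff]; linarith
  have key : ε * t < 1 - t := by
    have h1 : ε + 1 < Real.exp ε := Real.add_one_lt_exp (by linarith)
    have h2 : t * Real.exp ε = 1 := by
      rw [ht, ← Real.exp_add]; simp
    nlinarith [mul_lt_mul_of_pos_left h1 ht0]
  have hαt : 0 < α * t := mul_pos hα0 ht0
  have hc : 0 < (1 - α + α * t) * (1 + α) := by nlinarith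
  have hq : 0 < 1 - t * (1 - α * (1 - t)) := by nlinarith [mul_pos (show (0:ℝ) < 1 - t by linarith) (show (0:ℝ) < 1 + α * t by linarith)]
  rw [div_mul_eq_mul_div, div_lt_div_iff₀ hq (by linarith : (0:ℝ) < 1 + α)]
  nlinarith [mul_lt_mul_of_pos_left key hc,
    mul_nonneg (sq_nonneg α) (sq_nonneg (1 - t))]
end

section
/- (Simplified δ bound) Let 0 < α ≤ 1 and ε > 0, set p = α(1 − e^{−ε}) and q = 1 − e^{−ε}(1 − p), and let τ ≥ 0 be real. Then (τ/q)·D(q‖p) ≥ τ·C_α where C_α = ln(1/α) − 1/(1 + α); consequently the sample-and-threshold failure probability satisfies exp(−(τ/q)·D(q‖p)) ≤ exp(−C_α·τ). -/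
lemma key_kl_bound (α s : ℝ) (hα0 : 0 < α) (hα1 : α ≤ 1)
    (hs0 : 0 < s) (hs1 : s < 1) :
    (1 - s * (1 - α * (1 - s))) * (Real.log (1 / α) - 1 / (1 + α)) ≤
      klBernoulli (1 - s * (1 - α * (1 - s))) (α * (1 - s)) := by
  set p := α * (1 - s) with hp
  set q := 1 - s * (1 - p) with hq
  have hp0 : 0 < p := by have : 0 < 1 - s := by linarith
                         positivity
  have hp1 : p < 1 := by nlinarith
  have hB : 0 < 1 - p := by linarith
  have hA : (1:ℝ) ≤ 1 + α * s := by nlinarith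
  have hA0 : (0:ℝ) < 1 + α * s := by linarith
  have hq_eq : q = (1 - s) * (1 + α * s) := by rw [hq, hp]; ring
  have hq0 : 0 < q := by rw [hq_eq]; nlinarith
  have h1q : 1 - q = s * (1 - p) := by rw [hq]; ring
  have hqp : q / p = (1 + α * s) / α := by
    rw [hq_eq, hp]
    rw [div_eq_div_iff (by positivity) (ne_of_gt hα0)]
    ring
  have hq1p : (1 - q) / (1 - p) = s := by
    rw [h1q, mul_div_assoc, div_self (ne_of_gt hB), mul_one]
  have hα1' : (0:ℝ) < 1 + α := by linarith
  -- log bounds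
  have hlogA : (1 + α * s) - 1 ≤ (1 + α * s) * Real.log (1 + α * s) := by
    have h := Real.log_le_sub_one_of_pos (x := (1 + α * s)⁻¹) (by positivity)
    rw [Real.log_inv] at h
    have h2 : (1 + α * s) * (1 + α * s)⁻¹ = 1 := mul_inv_cancel₀ (ne_of_gt hA0)
    nlinarith
  have hlogs : s - 1 ≤ s * Real.log s := by
    have h := Real.log_le_sub_one_of_pos (x := s⁻¹) (by positivity)
    rw [Real.log_inv] at h
    have h2 : s * s⁻¹ = 1 := mul_inv_cancel₀ (ne_of_gt hs0)
    nlinarith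
  -- rewrite KL
  have hD : klBernoulli q p =
      q * (Real.log (1 + α * s) - Real.log α) + (s * (1 - p)) * Real.log s := by
    rw [klBernoulli, hqp, hq1p, h1q, Real.log_div (ne_of_gt hA0) (ne_of_gt hα0)]
  rw [hD, Real.log_div one_ne_zero (ne_of_gt hα0), Real.log_one]
  -- reduce to: 0 ≤ q * log(1+αs) + s*(1-p)*log s + q/(1+α)
  have hmain : 0 ≤ q * Real.log (1 + α * s) + (s * (1 - p)) * Real.log s + q / (1 + α) := by
    have hX : 0 ≤ (1 + α) * (q * Real.log (1 + α * s) + (s * (1 - p)) * Real.log s) + q := by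
      have h3 : (1 - p) * (s - 1) ≤ (1 - p) * (s * Real.log s) :=
        mul_le_mul_of_nonneg_left hlogs (le_of_lt hB)
      have h4 : (1 - s) * ((1 + α * s) - 1) ≤ (1 - s) * ((1 + α * s) * Real.log (1 + α * s)) :=
        mul_le_mul_of_nonneg_left hlogA (by linarith)
      rw [hq_eq]
      rw [hp] at h3 ⊢
      nlinarith [h3, h4, mul_nonneg (le_of_lt hα0) (le_of_lt hs0)]
    have heq : q * Real.log (1 + α * s) + (s * (1 - p)) * Real.log s + q / (1 + α)
        = ((1 + α) * (q * Real.log (1 + α * s) + (s * (1 - p)) * Real.log s) + q) / (1 + α) := by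
      field_simp
    rw [heq]
    exact div_nonneg hX (le_of_lt hα1')
  ring_nf
  ring_nf at hmain
  linarith [hmain]

/-- Simplified δ bound: with `p = α(1 - e^{-ε})`, `q = 1 - e^{-ε}(1-p)` and
`C_α = ln(1/α) − 1/(1+α)`, we have `(τ/q)·D(q‖p) ≥ τ·C_α`, hence
`exp(−(τ/q)·D(q‖p)) ≤ exp(−C_α·τ)`. -/
theorem simplified_delta_bound (α ε τ : ℝ) (hα0 : 0 < α) (hα1 : α ≤ 1)
    (hε : 0 < ε) (hτ : 0 ≤ τ) :
    τ * (Real.log (1 / α) - 1 / (1 + α)) ≤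
        (τ / (1 - Real.exp (-ε) * (1 - α * (1 - Real.exp (-ε))))) *
          klBernoulli (1 - Real.exp (-ε) * (1 - α * (1 - Real.exp (-ε))))
            (α * (1 - Real.exp (-ε))) ∧
      Real.exp (-((τ / (1 - Real.exp (-ε) * (1 - α * (1 - Real.exp (-ε))))) *
          klBernoulli (1 - Real.exp (-ε) * (1 - α * (1 - Real.exp (-ε))))
            (α * (1 - Real.exp (-ε)))))
        ≤ Real.exp (-((Real.log (1 / α) - 1 / (1 + α)) * τ)) := by
  set s := Real.exp (-ε) with hs
  have hs0 : 0 < s := Real.exp_pos _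
  have hs1 : s < 1 := by
    rw [hs, Real.exp_lt_one_iff]; linarith
  set q := 1 - s * (1 - α * (1 - s)) with hq
  have hq0 : 0 < q := by
    rw [hq]
    nlinarith [mul_pos (show (0:ℝ) < 1 - s by linarith) (show (0:ℝ) < 1 + α * s by positivity)]
  have hkey := key_kl_bound α s hα0 hα1 hs0 hs1
  have h1 : τ * (Real.log (1 / α) - 1 / (1 + α)) ≤
      (τ / q) * klBernoulli q (α * (1 - s)) := by
    have h2 : (τ / q) * (q * (Real.log (1 / α) - 1 / (1 + α))) ≤
        (τ / q) * klBernoulli q (α * (1 - s)) :=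
      mul_le_mul_of_nonneg_left hkey (div_nonneg hτ (le_of_lt hq0))
    have h3 : (τ / q) * (q * (Real.log (1 / α) - 1 / (1 + α)))
        = τ * (Real.log (1 / α) - 1 / (1 + α)) := by
      field_simp
    linarith
  refine ⟨h1, Real.exp_le_exp.mpr ?_⟩
  have : (Real.log (1 / α) - 1 / (1 + α)) * τ = τ * (Real.log (1 / α) - 1 / (1 + α)) := by ring
  linarith [h1, this]
end
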